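/- arXiv:2106.15519 — 4 statements merged into one kernel-verified Lean document; each statement's English description precedes it below -/
import Mathlib

section
/- Weierstrass Preparation Theorem: Let A = K[[X_1,...,X_n]] with maximal ideal M, and let f ∈ A[[X_{n+1}]] with f ≢ 0 mod M[[X_{n+1}]]. Let d be the smallest integer such that the coefficient a_d of X_{n+1}^d in f is not in M. Then there exists a unique pair (α, p) where α is an invertible element of A[[X_{n+1}]], p ∈ A[X_{n+1}] is a monic polynomial of degree d whose coefficients b_0,...,b_{d−1} all lie in M, and f = α·p. -/
/-!
Over a complete local ring `A`, a power series `f ∈ A⟦X⟧` whose reduction modulo the maximal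
ideal has order `d` is uniquely a unit times a distinguished polynomial of degree `d`: divide
`X ^ d` by `f` (Weierstrass division). For `A = K⟦X₁, …, Xₙ⟧` it remains to see that
`I = ⟨X₁, …, Xₙ⟩` is the maximal ideal and `A` is `I`-adically complete. Both come from `A` being
the `I`-adic completion of `K[X₁, …, Xₙ]`: the extension to the completion of the maximal ideal
of the variables is again maximal.
-/

open IsLocalRing
open scoped Polynomial

theorem MvPolynomial.idealOfVars_eq_ker_constantCoeff (σ R : Type*) [CommSemiring R] :
    idealOfVars σ R = RingHom.ker (constantCoeff (σ := σ) (R := R)) := by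
  ext p
  rw [← pow_one (idealOfVars σ R), mem_pow_idealOfVars_iff', RingHom.mem_ker]
  simp [Finsupp.degree_eq_zero_iff, constantCoeff]

namespace MvPowerSeries

theorem isMaximal_span_range_X (σ K : Type*) [Finite σ] [Field K] :
    (Ideal.span (Set.range X) : Ideal (MvPowerSeries σ K)).IsMaximal := by
  have : (MvPolynomial.idealOfVars σ K).IsMaximal := by
    rw [MvPolynomial.idealOfVars_eq_ker_constantCoeff]
    exact RingHom.ker_isMaximal_of_surjective _ fun a => ⟨MvPolynomial.C a, by simp⟩
  have := AdicCompletion.isMaximal_map_of_le _ _ le_rfl (MvPolynomial.idealOfVars_fg σ K)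
  let e := toAdicCompletionAlgEquiv σ K
  have hmap : (MvPolynomial.idealOfVars σ K).map (algebraMap _ (AdicCompletion _ _)) =
      (Ideal.span (Set.range X)).map e := by
    simp only [Ideal.map_span, ← Set.range_comp]
    congr 2
    ext1 i
    simp [← e.commutes, algebraMap_apply']
  rw [← Ideal.comap_map_of_bijective e e.bijective (I := Ideal.span _), ← hmap]
  exact Ideal.comap_isMaximal_of_equiv e

theorem maximalIdeal_eq_span_range_X (σ K : Type*) [Finite σ] [Field K] :
    maximalIdeal (MvPowerSeries σ K) = Ideal.span (Set.range X) :=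
  (eq_maximalIdeal (isMaximal_span_range_X σ K)).symm

instance (σ K : Type*) [Finite σ] [Field K] :
    IsAdicComplete (maximalIdeal (MvPowerSeries σ K)) (MvPowerSeries σ K) :=
  maximalIdeal_eq_span_range_X σ K ▸ inferInstance

end MvPowerSeries

namespace PowerSeries

variable {A : Type*} [CommRing A] [IsLocalRing A]

theorem order_map_residue_eq {f : A⟦X⟧} {d : ℕ} (hd : coeff d f ∉ maximalIdeal A)
    (hlt : ∀ i < d, coeff i f ∈ maximalIdeal A) : (f.map (residue A)).order = d := by
  simp only [order_eq_nat, coeff_map, ne_eq, residue_eq_zero_iff]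
  exact ⟨hd, hlt⟩

theorem isWeierstrassFactorization_iff_of_order_map_residue_eq {f : A⟦X⟧} {d : ℕ}
    (hord : (f.map (residue A)).order = d) (α : A⟦X⟧ˣ) (p : A[X]) :
    f.IsWeierstrassFactorization p α ↔
      p.Monic ∧ p.natDegree = d ∧ (∀ i < d, p.coeff i ∈ maximalIdeal A) ∧ f = α * p := by
  constructor
  · intro H
    have hdeg : p.natDegree = d := by
      rw [H.natDegree_eq_toNat_order_map, hord, ENat.toNat_natCast]
    exact ⟨H.isDistinguishedAt.monic, hdeg, fun i hi => H.isDistinguishedAt.mem (hdeg ▸ hi),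
      by rw [H.eq_mul, mul_comm]⟩
  · rintro ⟨hmon, rfl, hcoeff, hf⟩
    exact ⟨⟨⟨hcoeff _⟩, hmon⟩, α.isUnit, by rw [hf, mul_comm]⟩

theorem existsUnique_unit_mul_monic_of_coeff_notMem_maximalIdeal
    [IsAdicComplete (maximalIdeal A) A] (f : A⟦X⟧) {d : ℕ} (hd : coeff d f ∉ maximalIdeal A)
    (hlt : ∀ i < d, coeff i f ∈ maximalIdeal A) :
    ∃! αp : A⟦X⟧ˣ × A[X], αp.2.Monic ∧ αp.2.natDegree = d ∧
      (∀ i < d, αp.2.coeff i ∈ maximalIdeal A) ∧ f = αp.1 * αp.2 := by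
  have hord := order_map_residue_eq hd hlt
  have key := isWeierstrassFactorization_iff_of_order_map_residue_eq hord
  obtain ⟨p, u, H⟩ :=
    exists_isWeierstrassFactorization (order_finite_iff_ne_zero.1 (hord ▸ ENat.natCast_lt_top d))
  refine ⟨(H.isUnit.unit, p), (key _ _).1 H, fun ⟨α', p'⟩ H' => ?_⟩
  obtain ⟨rfl, hα⟩ := ((key α' p').2 H').elim H
  exact Prod.ext (Units.ext hα) rfl

end PowerSeries

theorem weierstrass_preparation_general (n : ℕ) (K : Type*) [Field K]
    (M : Ideal (MvPowerSeries (Fin n) K))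
    (hM : M = Ideal.span (Set.range (MvPowerSeries.X : Fin n → MvPowerSeries (Fin n) K)))
    (f : PowerSeries (MvPowerSeries (Fin n) K))
    (d : ℕ)
    (hd : PowerSeries.coeff (R := MvPowerSeries (Fin n) K) d f ∉ M)
    (hdmin : ∀ i < d, PowerSeries.coeff (R := MvPowerSeries (Fin n) K) i f ∈ M) :
    ∃! αp : (PowerSeries (MvPowerSeries (Fin n) K))ˣ × Polynomial (MvPowerSeries (Fin n) K),
      αp.2.Monic ∧ αp.2.natDegree = d ∧ (∀ i < d, αp.2.coeff i ∈ M) ∧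
      f = (αp.1 : PowerSeries (MvPowerSeries (Fin n) K)) *
        (αp.2 : PowerSeries (MvPowerSeries (Fin n) K)) := by
  subst hM
  rw [← MvPowerSeries.maximalIdeal_eq_span_range_X] at hd hdmin ⊢
  exact PowerSeries.existsUnique_unit_mul_monic_of_coeff_notMem_maximalIdeal f hd hdmin

/-- Weierstrass Preparation Theorem: for f ∈ A[[Y]], A = K[[X_1,...,X_n]] with
maximal ideal M, f ≢ 0 mod M[[Y]], and d the least index with coefficient a_d ∉ M,
there is a unique pair (α, p) with α a unit of A[[Y]], p ∈ A[Y] monic of degree d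
with non-leading coefficients in M, and f = α·p. -/
theorem weierstrass_preparation (n : ℕ) (K : Type*) [Field K]
    (M : Ideal (MvPowerSeries (Fin n) K))
    (hM : M = Ideal.span (Set.range (MvPowerSeries.X : Fin n → MvPowerSeries (Fin n) K)))
    (f : PowerSeries (MvPowerSeries (Fin n) K))
    (hne : ¬ ∀ i : ℕ, PowerSeries.coeff (R := MvPowerSeries (Fin n) K) i f ∈ M)
    (d : ℕ)
    (hd : PowerSeries.coeff (R := MvPowerSeries (Fin n) K) d f ∉ M)
    (hdmin : ∀ i < d, PowerSeries.coeff (R := MvPowerSeries (Fin n) K) i f ∈ M) :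
    ∃! αp : (PowerSeries (MvPowerSeries (Fin n) K))ˣ × Polynomial (MvPowerSeries (Fin n) K),
      αp.2.Monic ∧ αp.2.natDegree = d ∧ (∀ i < d, αp.2.coeff i ∈ M) ∧
      f = (αp.1 : PowerSeries (MvPowerSeries (Fin n) K)) *
        (αp.2 : PowerSeries (MvPowerSeries (Fin n) K)) :=
  weierstrass_preparation_general n K M hM f d hd hdmin
end

section
/- In the setting of the Weierstrass Preparation Theorem, if moreover f is a polynomial in X_{n+1} of degree d+m over A = K[[X_1,...,X_n]], then the unit factor α is a polynomial in X_{n+1} of degree m over A. -/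
/-!
Divide `f` by the monic `p` in `A[X]`: `f = p * q + r` with `deg r < d`. Then `p * (α - q) = r`,
and the uniqueness half of Weierstrass division (which only needs `A` to be `M`-adically Hausdorff,
true by Krull's intersection theorem since `M` lies in the Jacobson radical of the noetherian ring
`A`) forces `α = q` and `r = 0`. Hence `f = p * q` and `deg q = deg f - deg p = m`.
-/

open Polynomial

namespace MvPowerSeries

theorem span_range_X_le_jacobson_bot {σ R : Type*} [CommRing R] :
    Ideal.span (Set.range (X : σ → MvPowerSeries σ R)) ≤ Ideal.jacobson ⊥ := by
  rw [Ideal.span_le]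
  rintro _ ⟨i, rfl⟩
  exact Ideal.mem_jacobson_bot.2 fun y ↦ isUnit_iff_constantCoeff.2 (by simp)

instance isHausdorff_span_range_X {σ R : Type*} [CommRing R] [IsNoetherianRing R] [Finite σ] :
    IsHausdorff (Ideal.span (Set.range (X : σ → MvPowerSeries σ R))) (MvPowerSeries σ R) :=
  .of_le_jacobson _ _ span_range_X_le_jacobson_bot

end MvPowerSeries

namespace Polynomial.IsDistinguishedAt

variable {A : Type*} [CommRing A] {I : Ideal A} [IsHausdorff I A] {f p : A[X]}

theorem order_map_coe_toNat (hp : p.IsDistinguishedAt I) :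
    ((p : PowerSeries A).map (Ideal.Quotient.mk I)).order.toNat = p.natDegree := by
  rcases eq_or_ne I ⊤ with rfl | hI
  · have := ‹IsHausdorff ⊤ A›.subsingleton
    simp [Subsingleton.elim p 0]
  · rw [← hp.coe_natDegree_eq_order_map (p : PowerSeries A) 1
      (by rwa [PowerSeries.constantCoeff_one, ← Ideal.ne_top_iff_one]) (mul_one _).symm,
      ENat.toNat_natCast]

theorem coe_divByMonic_eq_of_coe_eq_mul (hp : p.IsDistinguishedAt I) {u : PowerSeries A}
    (hf : (f : PowerSeries A) = p * u) : ((f /ₘ p : A[X]) : PowerSeries A) = u ∧ f %ₘ p = 0 := by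
  nontriviality A
  have hdeg : (f %ₘ p).degree < p.natDegree := by
    simpa only [degree_eq_natDegree hp.monic.ne_zero] using degree_modByMonic_lt f hp.monic
  have hdiv : (p : PowerSeries A) * (u - (f /ₘ p : A[X])) = (f %ₘ p : A[X]) := by
    rw [mul_sub, ← hf, ← coe_mul, sub_eq_iff_eq_add, ← coe_add, modByMonic_add_div]
  obtain ⟨hsub, hmod⟩ := (hp.isWeierstrassDivisorAt' (I := I)).eq_zero_of_mul_eq
    (by rwa [hp.order_map_coe_toNat]) hdiv
  exact ⟨(sub_eq_zero.1 hsub).symm, hmod⟩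

end Polynomial.IsDistinguishedAt

theorem weierstrass_unit_is_polynomial_general (n : ℕ) (K : Type*) [Field K]
    (M : Ideal (MvPowerSeries (Fin n) K))
    (hM : M = Ideal.span (Set.range (MvPowerSeries.X : Fin n → MvPowerSeries (Fin n) K)))
    (d m : ℕ) (f p : Polynomial (MvPowerSeries (Fin n) K))
    (α : (PowerSeries (MvPowerSeries (Fin n) K))ˣ)
    (hfd : f.natDegree = d + m)
    (hp : p.Monic) (hpd : p.natDegree = d) (hpM : ∀ i < d, p.coeff i ∈ M)
    (heq : (f : PowerSeries (MvPowerSeries (Fin n) K)) =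
      (α : PowerSeries (MvPowerSeries (Fin n) K)) *
        (p : PowerSeries (MvPowerSeries (Fin n) K))) :
    ∃ q : Polynomial (MvPowerSeries (Fin n) K),
      (q : PowerSeries (MvPowerSeries (Fin n) K)) =
        (α : PowerSeries (MvPowerSeries (Fin n) K)) ∧ q.natDegree = m := by
  subst hM
  have hdist : p.IsDistinguishedAt _ := ⟨⟨fun hi ↦ hpM _ (hpd ▸ hi)⟩, hp⟩
  obtain ⟨hq, hr⟩ := hdist.coe_divByMonic_eq_of_coe_eq_mul (by rw [heq, mul_comm])
  have hq0 : f /ₘ p ≠ 0 := fun h ↦ α.ne_zero (by rw [← hq, h, coe_zero])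
  have hfpq : f = p * (f /ₘ p) := by
    simpa only [hr, zero_add] using (modByMonic_add_div f p).symm
  refine ⟨f /ₘ p, hq, ?_⟩
  have := hp.natDegree_mul' hq0
  rw [← hfpq, hfd, hpd] at this
  omega

/-- In the setting of Weierstrass preparation, if f is a polynomial of degree d + m
over A = K[[X_1,...,X_n]], then the unit α is a polynomial of degree m over A. -/
theorem weierstrass_unit_is_polynomial (n : ℕ) (K : Type*) [Field K]
    (M : Ideal (MvPowerSeries (Fin n) K))
    (hM : M = Ideal.span (Set.range (MvPowerSeries.X : Fin n → MvPowerSeries (Fin n) K)))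
    (d m : ℕ) (f p : Polynomial (MvPowerSeries (Fin n) K))
    (α : (PowerSeries (MvPowerSeries (Fin n) K))ˣ)
    (hf0 : f ≠ 0) (hfd : f.natDegree = d + m)
    (hd : f.coeff d ∉ M) (hdmin : ∀ i < d, f.coeff i ∈ M)
    (hp : p.Monic) (hpd : p.natDegree = d) (hpM : ∀ i < d, p.coeff i ∈ M)
    (heq : (f : PowerSeries (MvPowerSeries (Fin n) K)) =
      (α : PowerSeries (MvPowerSeries (Fin n) K)) *
        (p : PowerSeries (MvPowerSeries (Fin n) K))) :
    ∃ q : Polynomial (MvPowerSeries (Fin n) K),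
      (q : PowerSeries (MvPowerSeries (Fin n) K)) =
        (α : PowerSeries (MvPowerSeries (Fin n) K)) ∧ q.natDegree = m :=
  weierstrass_unit_is_polynomial_general n K M hM d m f p α hfd hp hpd hpM heq
end

section
/- Hensel's Lemma for power series: Let K be an algebraically closed field, A = K[[X_1,...,X_n]], and let f ∈ A[X_{n+1}] be monic of degree k. Write f̄ = f(0,...,0,X_{n+1}) ∈ K[X_{n+1}] and factor f̄ = Π_{j=1}^r (X_{n+1} − c_j)^{k_j} with pairwise distinct c_j ∈ K. Then there exist monic polynomials f_1,...,f_r ∈ A[X_{n+1}] such that f = f_1⋯f_r, deg f_j = k_j, and f̄_j = (X_{n+1} − c_j)^{k_j} for each j. -/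
/-!
Hensel lifting along the order filtration of `A = R[[X₁, …, Xₙ]]`. If `f ≡ GH` modulo power series
of order `≥ t + 1`, where `G, H` reduce to the coprime factors `g₀, h₀` of `f̄`, then a Bézout
identity for the constant lifts `g, h` of `g₀, h₀` solves `g b + h a = f - GH` with corrections
`a, b` of order `≥ t + 1` and `deg a < deg g`, `deg b < deg h`; then `f ≡ (G + a)(H + b)` modulo
order `≥ t + 2`. The corrections converge coefficientwise, and peeling off the factors
`(X - c_j)^{k_j}`, which are pairwise coprime because the `c_j` are distinct, one at a time
gives the factorization.
-/

theorem exists_seq_of_forall_exists {α : Type*} {P : ℕ → α → Prop} {Q : ℕ → α → α → Prop}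
    {x : α} (hx : P 0 x) (step : ∀ t y, P t y → ∃ z, P (t + 1) z ∧ Q t y z) :
    ∃ s : ℕ → α, (∀ t, P t (s t)) ∧ ∀ t, Q t (s t) (s (t + 1)) := by
  choose! next hnextP hnextQ using step
  let s : ℕ → α := fun t => Nat.rec x (fun t y => next t y) t
  have hs : ∀ t, P t (s t) := fun t => by
    induction t with
    | zero => exact hx
    | succ t ih => exact hnextP t _ ih
  exact ⟨s, hs, fun t => hnextQ t _ (hs t)⟩

theorem sub_mem_of_forall_succ_sub_mem {S : Type*} [Ring S] {F : ℕ → Ideal S} (hF : Antitone F)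
    {p : ℕ → S} (hp : ∀ t, p (t + 1) - p t ∈ F (t + 1)) {s t : ℕ} (hst : s ≤ t) :
    p t - p s ∈ F (s + 1) := by
  induction t, hst using Nat.le_induction with
  | base => simp
  | succ t hst ih =>
    rw [← sub_add_sub_cancel]
    exact add_mem (hF (by omega) (hp t)) ih

open Polynomial

namespace Polynomial

variable {R : Type*} [CommRing R]

theorem map_quotient_mk_eq_zero_iff {I : Ideal R} {p : R[X]} :
    p.map (Ideal.Quotient.mk I) = 0 ↔ p ∈ I.map C := by
  have hker := ker_mapRingHom (Ideal.Quotient.mk I)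
  rw [Ideal.mk_ker] at hker
  rw [← hker, RingHom.mem_ker, coe_mapRingHom]

theorem modByMonic_mem_map_C {I : Ideal R} {p q : R[X]} (hp : p ∈ I.map C) (hq : q.Monic) :
    p %ₘ q ∈ I.map C := by
  rw [← map_quotient_mk_eq_zero_iff] at hp ⊢
  rw [map_modByMonic _ hq, hp, zero_modByMonic]

theorem divByMonic_mem_map_C {I : Ideal R} {p q : R[X]} (hp : p ∈ I.map C) (hq : q.Monic) :
    p /ₘ q ∈ I.map C := by
  rw [← map_quotient_mk_eq_zero_iff] at hp ⊢
  rw [map_divByMonic _ hq, hp, zero_divByMonic]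

variable [Nontrivial R]

theorem exists_mul_add_mul_eq_of_isCoprime {I : Ideal R} {g h e : R[X]} (hg : g.Monic)
    (hh : h.Monic) (hgh : IsCoprime g h) (he : e ∈ I.map C)
    (hed : e.degree < g.degree + h.degree) :
    ∃ a ∈ I.map C, ∃ b ∈ I.map C,
      a.degree < g.degree ∧ b.degree < h.degree ∧ g * b + h * a = e := by
  obtain ⟨u, v, huv⟩ := hgh
  have hve : v * e ∈ I.map C := Ideal.mul_mem_left _ _ he
  set a := v * e %ₘ g
  set b := u * e + h * (v * e /ₘ g)
  have hsum : g * b + h * a = e := by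
    linear_combination e * huv + h * modByMonic_add_div (v * e) g
  have had : a.degree < g.degree := degree_modByMonic_lt _ hg
  have hhad : (h * a).degree < g.degree + h.degree := by
    rw [mul_comm, hh.degree_mul]
    exact WithBot.add_lt_add_right (degree_ne_bot.mpr hh.ne_zero) had
  refine ⟨a, modByMonic_mem_map_C hve hg, b,
    Ideal.add_mem _ (Ideal.mul_mem_left _ _ he)
      (Ideal.mul_mem_left _ _ (divByMonic_mem_map_C hve hg)), had, ?_, hsum⟩
  have hgbd : (b * g).degree < h.degree + g.degree := by
    rw [mul_comm, add_comm, eq_sub_of_add_eq hsum]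
    exact (degree_sub_le _ _).trans_lt (max_lt hed hhad)
  rwa [hg.degree_mul, WithBot.add_lt_add_iff_right (degree_ne_bot.mpr hg.ne_zero)] at hgbd

theorem exists_hensel_correction {I T T' : Ideal R} (hTI : T ≤ I) (hT' : T * I ≤ T')
    {f g h A B : R[X]} (hf : f.Monic) (hfd : f.degree = g.degree + h.degree) (hg : g.Monic)
    (hh : h.Monic) (hgh : IsCoprime g h) (hA : A ∈ I.map C) (hB : B ∈ I.map C)
    (hAd : A.degree < g.degree) (hBd : B.degree < h.degree)
    (he : f - (g + A) * (h + B) ∈ T.map C) :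
    ∃ a ∈ T.map C, ∃ b ∈ T.map C, a.degree < g.degree ∧ b.degree < h.degree ∧
      f - (g + (A + a)) * (h + (B + b)) ∈ T'.map C := by
  have hed : (f - (g + A) * (h + B)).degree < g.degree + h.degree := by
    have hGH : ((g + A) * (h + B)).degree = g.degree + h.degree := by
      rw [(hh.add_of_left hBd).degree_mul, degree_add_eq_left_of_degree_lt hAd,
        degree_add_eq_left_of_degree_lt hBd]
    rw [← hfd]
    refine degree_sub_lt_left (hfd.trans hGH.symm) hf.ne_zero ?_
    rw [hf.leadingCoeff, ((hg.add_of_left hAd).mul (hh.add_of_left hBd)).leadingCoeff]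
  obtain ⟨a, ha, b, hb, had, hbd, hab⟩ := exists_mul_add_mul_eq_of_isCoprime hg hh hgh he hed
  refine ⟨a, ha, b, hb, had, hbd, ?_⟩
  have hTIC : T.map C * I.map C ≤ T'.map (C : R →+* R[X]) := by
    rw [← Ideal.map_mul]
    exact Ideal.map_mono hT'
  have hTTC : T.map C * T.map C ≤ T'.map (C : R →+* R[X]) :=
    (Ideal.mul_mono_right (Ideal.map_mono hTI)).trans hTIC
  rw [show f - (g + (A + a)) * (h + (B + b)) = -(b * A + a * B + a * b) by
    linear_combination -hab]
  exact neg_mem (Ideal.add_mem _ (Ideal.add_mem _ (hTIC (Ideal.mul_mem_mul hb hA))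
    (hTIC (Ideal.mul_mem_mul ha hB))) (hTTC (Ideal.mul_mem_mul ha hb)))

theorem exists_hensel_seq {F : ℕ → Ideal R} (hF : Antitone F)
    (hFmul : ∀ s t, F s * F t ≤ F (s + t)) {f g h : R[X]} (hf : f.Monic)
    (hfd : f.degree = g.degree + h.degree) (hg : g.Monic) (hh : h.Monic) (hgh : IsCoprime g h)
    (he : f - g * h ∈ (F 1).map C) :
    ∃ s : ℕ → R[X] × R[X],
      (∀ t, (s t).1 ∈ (F 1).map C ∧ (s t).2 ∈ (F 1).map C ∧
        (s t).1.degree < g.degree ∧ (s t).2.degree < h.degree ∧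
        f - (g + (s t).1) * (h + (s t).2) ∈ (F (t + 1)).map C) ∧
      ∀ t, (s (t + 1)).1 - (s t).1 ∈ (F (t + 1)).map C ∧
        (s (t + 1)).2 - (s t).2 ∈ (F (t + 1)).map C := by
  refine exists_seq_of_forall_exists (x := (0, 0))
    (P := fun t AB => AB.1 ∈ (F 1).map C ∧ AB.2 ∈ (F 1).map C ∧ AB.1.degree < g.degree ∧
      AB.2.degree < h.degree ∧ f - (g + AB.1) * (h + AB.2) ∈ (F (t + 1)).map C)
    (Q := fun t AB AB' => AB'.1 - AB.1 ∈ (F (t + 1)).map C ∧ AB'.2 - AB.2 ∈ (F (t + 1)).map C)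
    ?_ ?_
  · simpa [hg.ne_zero, hh.ne_zero, bot_lt_iff_ne_bot] using he
  · rintro t ⟨A, B⟩ ⟨hA, hB, hAd, hBd, he⟩
    obtain ⟨a, ha, b, hb, had, hbd, he'⟩ :=
      exists_hensel_correction (hF (by omega)) (hFmul _ _) hf hfd hg hh hgh hA hB hAd hBd he
    have hmono : (F (t + 1)).map C ≤ (F 1).map (C : R →+* R[X]) := Ideal.map_mono (hF (by omega))
    exact ⟨(A + a, B + b), ⟨add_mem hA (hmono ha), add_mem hB (hmono hb),
      (degree_add_le _ _).trans_lt (max_lt hAd had), (degree_add_le _ _).trans_lt (max_lt hBd hbd),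
      he'⟩, by simpa using ha, by simpa using hb⟩

end Polynomial

namespace MvPowerSeries

variable {σ R : Type*} [CommRing R]

variable (σ R) in
def orderIdeal (t : ℕ) : Ideal (MvPowerSeries σ R) where
  carrier := {x | (t : ℕ∞) ≤ x.order}
  add_mem' ha hb := (le_min ha hb).trans min_order_le_add
  zero_mem' := by simp
  smul_mem' _ _ hx := (le_add_left hx).trans le_order_mul

theorem mem_orderIdeal {t : ℕ} {x : MvPowerSeries σ R} :
    x ∈ orderIdeal σ R t ↔ (t : ℕ∞) ≤ x.order :=
  Iff.rfl

theorem orderIdeal_antitone : Antitone (orderIdeal σ R) :=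
  fun _ _ hst _ hx => mem_orderIdeal.mpr ((Nat.cast_le.mpr hst).trans (mem_orderIdeal.mp hx))

theorem orderIdeal_mul_le (s t : ℕ) :
    orderIdeal σ R s * orderIdeal σ R t ≤ orderIdeal σ R (s + t) :=
  Ideal.mul_le.mpr fun _ hx _ hy => by
    rw [mem_orderIdeal, Nat.cast_add]
    exact (add_le_add hx hy).trans le_order_mul

theorem orderIdeal_one : orderIdeal σ R 1 = RingHom.ker constantCoeff := by
  ext x
  rw [mem_orderIdeal, RingHom.mem_ker, Nat.cast_one, one_le_order_iff_constCoeff_eq_zero]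

theorem eq_zero_of_forall_mem_orderIdeal {x : MvPowerSeries σ R}
    (hx : ∀ t, x ∈ orderIdeal σ R t) : x = 0 := by
  ext d
  exact coeff_of_lt_order ((Nat.cast_lt.mpr d.degree.lt_succ_self).trans_le (hx _))

/-- For `p` Cauchy in the `orderIdeal` filtration, the coefficient of `X^d` no longer changes
after the term `p (degree d)`. -/
noncomputable def seqLimit (p : ℕ → MvPowerSeries σ R) : MvPowerSeries σ R :=
  fun d => coeff d (p d.degree)

theorem coeff_seqLimit (p : ℕ → MvPowerSeries σ R) (d : σ →₀ ℕ) :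
    coeff d (seqLimit p) = coeff d (p d.degree) :=
  rfl

theorem seqLimit_sub_mem_orderIdeal {p : ℕ → MvPowerSeries σ R}
    (hp : ∀ t, p (t + 1) - p t ∈ orderIdeal σ R (t + 1)) (t : ℕ) :
    seqLimit p - p t ∈ orderIdeal σ R (t + 1) := by
  refine nat_le_order fun d hd => ?_
  have hdt : d.degree ≤ t := Nat.lt_succ_iff.mp (by exact_mod_cast hd)
  have hstable := sub_mem_of_forall_succ_sub_mem orderIdeal_antitone hp hdt
  rw [map_sub, coeff_seqLimit, ← neg_sub, neg_eq_zero, ← map_sub]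
  exact coeff_of_lt_order ((Nat.cast_lt.mpr d.degree.lt_succ_self).trans_le hstable)

theorem exists_polynomial_limit {n : ℕ} {P : ℕ → (MvPowerSeries σ R)[X]}
    (hPd : ∀ t, (P t).degree < n)
    (hP : ∀ t, P (t + 1) - P t ∈ (orderIdeal σ R (t + 1)).map Polynomial.C) :
    ∃ Q : (MvPowerSeries σ R)[X], Q.degree < n ∧
      ∀ t, Q - P t ∈ (orderIdeal σ R (t + 1)).map Polynomial.C := by
  let Q := ∑ i ∈ Finset.range n, Polynomial.monomial i (seqLimit fun t => (P t).coeff i)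
  have hQ : ∀ i, Q.coeff i = seqLimit fun t => (P t).coeff i := by
    intro i
    simp only [Q, finsetSum_coeff, Polynomial.coeff_monomial, Finset.sum_ite_eq', Finset.mem_range]
    split_ifs with hi
    · rfl
    · ext d
      rw [coeff_seqLimit,
        coeff_eq_zero_of_degree_lt ((hPd _).trans_le (by exact_mod_cast not_lt.mp hi))]
  refine ⟨Q, mem_degreeLT.mp (Submodule.sum_mem _ fun i hi => mem_degreeLT.mpr
    ((degree_monomial_le _ _).trans_lt (by exact_mod_cast Finset.mem_range.mp hi))), fun t => ?_⟩
  refine Ideal.mem_map_C_iff.mpr fun i => ?_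
  rw [coeff_sub, hQ]
  refine seqLimit_sub_mem_orderIdeal (fun t => ?_) t
  rw [← coeff_sub]
  exact Ideal.mem_map_C_iff.mp (hP t) i

theorem eq_zero_of_forall_mem_map_orderIdeal {P : (MvPowerSeries σ R)[X]}
    (hP : ∀ t, P ∈ (orderIdeal σ R t).map Polynomial.C) : P = 0 :=
  Polynomial.ext fun i => eq_zero_of_forall_mem_orderIdeal fun t => Ideal.mem_map_C_iff.mp (hP t) i

theorem mem_map_orderIdeal_one_iff {P : (MvPowerSeries σ R)[X]} :
    P ∈ (orderIdeal σ R 1).map Polynomial.C ↔ P.map constantCoeff = 0 := by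
  rw [orderIdeal_one, ← ker_mapRingHom, RingHom.mem_ker, coe_mapRingHom]

theorem eq_mul_of_forall_sub_mul_mem {f G H : (MvPowerSeries σ R)[X]}
    {Gs Hs : ℕ → (MvPowerSeries σ R)[X]}
    (hG : ∀ t, G - Gs t ∈ (orderIdeal σ R (t + 1)).map Polynomial.C)
    (hH : ∀ t, H - Hs t ∈ (orderIdeal σ R (t + 1)).map Polynomial.C)
    (hf : ∀ t, f - Gs t * Hs t ∈ (orderIdeal σ R (t + 1)).map Polynomial.C) : f = G * H := by
  refine sub_eq_zero.mp (eq_zero_of_forall_mem_map_orderIdeal fun t => ?_)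
  rw [show f - G * H = f - Gs t * Hs t - ((G - Gs t) * H + Gs t * (H - Hs t)) by ring]
  exact Ideal.map_mono (orderIdeal_antitone t.le_succ) (sub_mem (hf t)
    (add_mem (Ideal.mul_mem_right _ _ (hG t)) (Ideal.mul_mem_left _ _ (hH t))))

theorem exists_monic_factors_of_map_eq_mul [Nontrivial R] {f : (MvPowerSeries σ R)[X]}
    (hf : f.Monic) {g₀ h₀ : R[X]} (hg₀ : g₀.Monic) (hh₀ : h₀.Monic) (hgh₀ : IsCoprime g₀ h₀)
    (hfgh : f.map constantCoeff = g₀ * h₀) :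
    ∃ G H : (MvPowerSeries σ R)[X], G.Monic ∧ H.Monic ∧ f = G * H ∧
      G.map constantCoeff = g₀ ∧ H.map constantCoeff = h₀ := by
  let g := g₀.map (C (σ := σ))
  let h := h₀.map (C (σ := σ))
  have hg : g.Monic := hg₀.map _
  have hh : h.Monic := hh₀.map _
  have hmapC : ∀ p : R[X], (p.map (C (σ := σ))).map constantCoeff = p := fun p => by
    rw [Polynomial.map_map, constantCoeff_comp_C, Polynomial.map_id]
  have hfd : f.degree = g.degree + h.degree := by
    rw [← hf.degree_map constantCoeff, hfgh, hh₀.degree_mul, hg₀.degree_map, hh₀.degree_map]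
  have he : f - g * h ∈ (orderIdeal σ R 1).map Polynomial.C := by
    rw [mem_map_orderIdeal_one_iff, Polynomial.map_sub, Polynomial.map_mul, hmapC, hmapC, hfgh,
      sub_self]
  have hgh : IsCoprime g h := hgh₀.map (mapRingHom (C (σ := σ)))
  obtain ⟨s, hs, hsucc⟩ := exists_hensel_seq (F := orderIdeal σ R) orderIdeal_antitone
    orderIdeal_mul_le hf hfd hg hh hgh he
  have hgd : g.degree = g.natDegree := degree_eq_natDegree hg.ne_zero
  have hhd : h.degree = h.natDegree := degree_eq_natDegree hh.ne_zero
  obtain ⟨A, hAd, hA⟩ := exists_polynomial_limit (n := g.natDegree) (P := fun t => (s t).1)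
    (fun t => hgd ▸ (hs t).2.2.1) (fun t => (hsucc t).1)
  obtain ⟨B, hBd, hB⟩ := exists_polynomial_limit (n := h.natDegree) (P := fun t => (s t).2)
    (fun t => hhd ▸ (hs t).2.2.2.1) (fun t => (hsucc t).2)
  have hA₁ : A ∈ (orderIdeal σ R 1).map Polynomial.C := by
    simpa using add_mem (hA 0) (hs 0).1
  have hB₁ : B ∈ (orderIdeal σ R 1).map Polynomial.C := by
    simpa using add_mem (hB 0) (hs 0).2.1
  refine ⟨g + A, h + B, hg.add_of_left (hgd ▸ hAd), hh.add_of_left (hhd ▸ hBd), ?_, ?_, ?_⟩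
  · refine eq_mul_of_forall_sub_mul_mem (Gs := fun t => g + (s t).1) (Hs := fun t => h + (s t).2)
      (fun t => ?_) (fun t => ?_) (fun t => (hs t).2.2.2.2)
    · simpa using hA t
    · simpa using hB t
  · rw [Polynomial.map_add, hmapC, mem_map_orderIdeal_one_iff.mp hA₁, add_zero]
  · rw [Polynomial.map_add, hmapC, mem_map_orderIdeal_one_iff.mp hB₁, add_zero]

theorem exists_monic_factors_of_map_eq_prod [Nontrivial R] {r : ℕ} {f : (MvPowerSeries σ R)[X]}
    (hf : f.Monic) {g₀ : Fin r → R[X]} (hg₀ : ∀ j, (g₀ j).Monic)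
    (hcop : Pairwise fun i j => IsCoprime (g₀ i) (g₀ j)) (hfg : f.map constantCoeff = ∏ j, g₀ j) :
    ∃ F : Fin r → (MvPowerSeries σ R)[X],
      (∀ j, (F j).Monic) ∧ f = ∏ j, F j ∧ ∀ j, (F j).map constantCoeff = g₀ j := by
  induction r generalizing f with
  | zero =>
    refine ⟨finZeroElim, finZeroElim, ?_, finZeroElim⟩
    rw [Fin.prod_univ_zero] at hfg ⊢
    rw [← hf.natDegree_eq_zero, ← hf.natDegree_map constantCoeff, hfg, natDegree_one]
  | succ r ih =>
    rw [Fin.prod_univ_succ] at hfg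
    obtain ⟨G, H, hG, hH, rfl, hGg, hHg⟩ := exists_monic_factors_of_map_eq_mul hf (hg₀ 0)
      (monic_prod_of_monic _ _ fun j _ => hg₀ j.succ)
      (IsCoprime.prod_right fun j _ => hcop (Fin.succ_ne_zero j).symm) hfg
    obtain ⟨F, hF, rfl, hFg⟩ := ih hH (fun j => hg₀ j.succ)
      (fun i j hij => hcop ((Fin.succ_injective r).ne hij)) hHg
    refine ⟨Fin.cons G F, Fin.cases hG hF, by rw [Fin.prod_univ_succ]; rfl, Fin.cases hGg hFg⟩

end MvPowerSeries

theorem hensel_factorization_general (n : ℕ) (K : Type*) [Field K]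
    (r : ℕ) (f : Polynomial (MvPowerSeries (Fin n) K))
    (hmonic : f.Monic)
    (c : Fin r → K) (hc : Function.Injective c)
    (mult : Fin r → ℕ)
    (hbar : f.map (MvPowerSeries.constantCoeff : MvPowerSeries (Fin n) K →+* K) =
      ∏ j, (Polynomial.X - Polynomial.C (c j)) ^ mult j) :
    ∃ F : Fin r → Polynomial (MvPowerSeries (Fin n) K),
      (∀ j, (F j).Monic) ∧
      f = ∏ j, F j ∧
      (∀ j, (F j).natDegree = mult j) ∧
      (∀ j, (F j).map (MvPowerSeries.constantCoeff : MvPowerSeries (Fin n) K →+* K) =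
        (Polynomial.X - Polynomial.C (c j)) ^ mult j) := by
  obtain ⟨F, hFm, hprod, hFc⟩ := MvPowerSeries.exists_monic_factors_of_map_eq_prod hmonic
    (fun j => (monic_X_sub_C (c j)).pow (mult j))
    ((pairwise_coprime_X_sub_C hc).mono fun _ _ h => h.pow) hbar
  refine ⟨F, hFm, hprod, fun j => ?_, hFc⟩
  rw [← (hFm j).natDegree_map MvPowerSeries.constantCoeff, hFc j, natDegree_pow,
    natDegree_X_sub_C, mul_one]

/-- Hensel's Lemma: for K algebraically closed, A = K[[X_1,...,X_n]], and
f ∈ A[Y] monic of degree k with f̄ = Π_j (Y - c_j)^{k_j} for pairwise distinct c_j,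
there exist monic f_j ∈ A[Y] with f = f_1⋯f_r, deg f_j = k_j, and
f̄_j = (Y - c_j)^{k_j}. -/
theorem hensel_factorization (n : ℕ) (K : Type*) [Field K] [IsAlgClosed K]
    (k r : ℕ) (f : Polynomial (MvPowerSeries (Fin n) K))
    (hmonic : f.Monic) (hdeg : f.natDegree = k)
    (c : Fin r → K) (hc : Function.Injective c)
    (mult : Fin r → ℕ) (hmult : ∀ j, 0 < mult j)
    (hbar : f.map (MvPowerSeries.constantCoeff : MvPowerSeries (Fin n) K →+* K) =
      ∏ j, (Polynomial.X - Polynomial.C (c j)) ^ mult j) :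
    ∃ F : Fin r → Polynomial (MvPowerSeries (Fin n) K),
      (∀ j, (F j).Monic) ∧
      f = ∏ j, F j ∧
      (∀ j, (F j).natDegree = mult j) ∧
      (∀ j, (F j).map (MvPowerSeries.constantCoeff : MvPowerSeries (Fin n) K →+* K) =
        (Polynomial.X - Polynomial.C (c j)) ^ mult j) :=
  hensel_factorization_general n K r f hmonic c hc mult hbar
end

section
/- Uniqueness in Weierstrass preparation: if f = α·p = α'·p' where α, α' are units of A[[X_{n+1}]] and p, p' ∈ A[X_{n+1}] are monic of degree d with all non-leading coefficients in M, then α = α' and p = p'. -/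
/-!
From `α * p = α' * p'` we get `p * (α'⁻¹ * α - 1) = p' - p`, a polynomial of degree `< d`.
Since `p` is distinguished at `M`, uniqueness of Weierstrass division by `p` forces both sides to
vanish, provided `A` is `M`-adically separated; this holds by Krull's intersection theorem, `A`
being a Noetherian local ring.
-/

open Polynomial

theorem Polynomial.Monic.degree_sub_lt_natDegree {R : Type*} [Ring R] {p q : R[X]}
    (hp : p.Monic) (hq : q.Monic) (h : p.natDegree = q.natDegree) :
    (p - q).degree < p.natDegree := by
  nontriviality R
  rw [← degree_eq_natDegree hp.ne_zero]
  refine degree_sub_lt_left ?_ hp.ne_zero (by rw [hp.leadingCoeff, hq.leadingCoeff])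
  rw [degree_eq_natDegree hp.ne_zero, degree_eq_natDegree hq.ne_zero, h]

theorem MvPowerSeries.span_range_X_ne_top (σ R : Type*) [CommRing R] [Nontrivial R] :
    Ideal.span (Set.range (X : σ → MvPowerSeries σ R)) ≠ ⊤ :=
  ne_top_of_le_ne_top (RingHom.ker_ne_top constantCoeff)
    (Ideal.span_le.2 (by rintro _ ⟨i, rfl⟩; simp))

namespace Polynomial.IsDistinguishedAt

variable {A : Type*} [CommRing A] {I : Ideal A} {p : A[X]}

theorem natDegree_eq_toNat_order_map (hp : p.IsDistinguishedAt I) (hI : I ≠ ⊤) :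
    p.natDegree = ((p : PowerSeries A).map (Ideal.Quotient.mk I)).order.toNat :=
  congr(ENat.toNat $(hp.coe_natDegree_eq_order_map (p : PowerSeries A) 1
    (by rwa [map_one, ← Ideal.ne_top_iff_one]) (mul_one _).symm))

theorem eq_one_of_mul_eq [IsHausdorff I A] (hp : p.IsDistinguishedAt I) {p' : A[X]}
    (hp' : p'.Monic) (hdeg : p'.natDegree = p.natDegree) {u : PowerSeries A}
    (h : (p : PowerSeries A) * u = p') : u = 1 ∧ p' = p := by
  rcases eq_or_ne I ⊤ with rfl | hI
  · have := ‹IsHausdorff ⊤ A›.subsingleton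
    exact ⟨Subsingleton.elim _ _, Subsingleton.elim _ _⟩
  have hdiff : (p : PowerSeries A) * (u - 1) = ↑(p' - p) := by
    rw [mul_sub, mul_one, h, Polynomial.coe_sub]
  have hlt : (p' - p).degree < ((p : PowerSeries A).map (Ideal.Quotient.mk I)).order.toNat := by
    rw [← hp.natDegree_eq_toNat_order_map hI, ← hdeg]
    exact hp'.degree_sub_lt_natDegree hp.monic hdeg
  obtain ⟨hu, hpp⟩ := hp.isWeierstrassDivisorAt'.eq_zero_of_mul_eq hlt hdiff
  exact ⟨sub_eq_zero.mp hu, sub_eq_zero.mp hpp⟩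

end Polynomial.IsDistinguishedAt

theorem weierstrass_preparation_unique_general (n : ℕ) (K : Type*) [Field K]
    (M : Ideal (MvPowerSeries (Fin n) K))
    (hM : M = Ideal.span (Set.range (MvPowerSeries.X : Fin n → MvPowerSeries (Fin n) K)))
    (f : PowerSeries (MvPowerSeries (Fin n) K))
    (d : ℕ)
    (α α' : (PowerSeries (MvPowerSeries (Fin n) K))ˣ)
    (p p' : Polynomial (MvPowerSeries (Fin n) K))
    (hp : p.Monic) (hpd : p.natDegree = d) (hpM : ∀ i < d, p.coeff i ∈ M)
    (hp' : p'.Monic) (hpd' : p'.natDegree = d)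
    (heq : f = (α : PowerSeries (MvPowerSeries (Fin n) K)) *
      (p : PowerSeries (MvPowerSeries (Fin n) K)))
    (heq' : f = (α' : PowerSeries (MvPowerSeries (Fin n) K)) *
      (p' : PowerSeries (MvPowerSeries (Fin n) K))) :
    α = α' ∧ p = p' := by
  have : IsHausdorff M (MvPowerSeries (Fin n) K) :=
    .of_isLocalRing _ _ (hM ▸ MvPowerSeries.span_range_X_ne_top _ _)
  have hdist : p.IsDistinguishedAt M := ⟨⟨fun hi ↦ hpM _ (hpd ▸ hi)⟩, hp⟩
  have hmul : (p : PowerSeries (MvPowerSeries (Fin n) K)) * ↑(α'⁻¹ * α) = p' := by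
    rw [Units.val_mul, mul_comm, mul_assoc, ← heq, heq', ← mul_assoc, Units.inv_mul, one_mul]
  obtain ⟨hu, rfl⟩ := hdist.eq_one_of_mul_eq hp' (hpd'.trans hpd.symm) hmul
  exact ⟨(inv_mul_eq_one.mp (Units.ext hu)).symm, rfl⟩

/-- Uniqueness in Weierstrass preparation: if f = α·p = α'·p' with α, α' units of
A[[Y]] and p, p' ∈ A[Y] monic of degree d with non-leading coefficients in M,
then α = α' and p = p'. -/
theorem weierstrass_preparation_unique (n : ℕ) (K : Type*) [Field K]
    (M : Ideal (MvPowerSeries (Fin n) K))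
    (hM : M = Ideal.span (Set.range (MvPowerSeries.X : Fin n → MvPowerSeries (Fin n) K)))
    (f : PowerSeries (MvPowerSeries (Fin n) K))
    (hne : ¬ ∀ i : ℕ, PowerSeries.coeff i f ∈ M)
    (d : ℕ)
    (hd : IsUnit (PowerSeries.coeff d f))
    (hdmin : ∀ i < d, ¬ IsUnit (PowerSeries.coeff i f))
    (α α' : (PowerSeries (MvPowerSeries (Fin n) K))ˣ)
    (p p' : Polynomial (MvPowerSeries (Fin n) K))
    (hp : p.Monic) (hpd : p.natDegree = d) (hpM : ∀ i < d, p.coeff i ∈ M)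
    (hp' : p'.Monic) (hpd' : p'.natDegree = d) (hpM' : ∀ i < d, p'.coeff i ∈ M)
    (heq : f = (α : PowerSeries (MvPowerSeries (Fin n) K)) *
      (p : PowerSeries (MvPowerSeries (Fin n) K)))
    (heq' : f = (α' : PowerSeries (MvPowerSeries (Fin n) K)) *
      (p' : PowerSeries (MvPowerSeries (Fin n) K))) :
    α = α' ∧ p = p' :=
  weierstrass_preparation_unique_general n K M hM f d α α' p p' hp hpd hpM hp' hpd' heq heq'
end
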